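/- Let 𝒪 be an order ideal in P = K[x_0,…,x_n], fix a labeling of ∂𝒪 ordered increasingly by degree, and let G be a homogeneous ∂𝒪-prebasis. Then the border reduction relation →_G is Noetherian: there is no infinite chain f_1 →_G f_2 →_G f_3 →_G ⋯ of polynomials in P. -/

import Mathlib

open MvPolynomial

namespace Border

/-- A term of `K[x_0, …, x_n]`, identified with its exponent vector. -/
abbrev Term (n : ℕ) := Fin (n + 1) →₀ ℕ

variable {n : ℕ}

/-- The (standard) degree of a term. -/
def tdeg (m : Term n) : ℕ := ∑ i, m i

/-- An order ideal: a nonempty set of terms closed under divisors. -/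
def IsOrderIdeal (O : Set (Term n)) : Prop :=
  O.Nonempty ∧ ∀ τ ∈ O, ∀ τ' : Term n, τ' ≤ τ → τ' ∈ O

/-- The border `∂𝒪 = (x_0·𝒪 ∪ ⋯ ∪ x_n·𝒪) ∖ 𝒪`. -/
def border (O : Set (Term n)) : Set (Term n) :=
  {σ | σ ∉ O ∧ ∃ r : Fin (n + 1), ∃ τ ∈ O, σ = τ + Finsupp.single r 1}

/-- Multiplicative set of a border term `σ`, with respect to a labeling `lab` of the border:
`𝒯_σ = {η : σ' ∤ η·σ for every border term σ' with a larger label}`. -/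
def mulSet (O : Set (Term n)) (lab : Term n → ℕ) (σ : Term n) : Set (Term n) :=
  {η | ∀ σ' ∈ border O, lab σ < lab σ' → ¬ σ' ≤ η + σ}

/-- The cone `C(σ) = {η·σ : η ∈ 𝒯_σ}`. -/
def cone (O : Set (Term n)) (lab : Term n → ℕ) (σ : Term n) : Set (Term n) :=
  (fun η => η + σ) '' mulSet O lab σ

/-- A labeling of the border which is injective and ordered increasingly by degree. -/
def DegOrderedLabeling (O : Set (Term n)) (lab : Term n → ℕ) : Prop :=
  Set.InjOn lab (border O) ∧
    ∀ σ ∈ border O, ∀ σ' ∈ border O, lab σ < lab σ' → tdeg σ ≤ tdeg σ'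

/-- Iterated border closures: `∂⁰𝒪 := 𝒪`, and the `(k+1)`-st closure adds the border. -/
def borderClosure (O : Set (Term n)) : ℕ → Set (Term n)
  | 0 => O
  | k + 1 => borderClosure O k ∪ border (borderClosure O k)

/-- The index `ind_𝒪(τ)`: the least `k` with `τ ∈ ∂^k𝒪`. -/
noncomputable def ind (O : Set (Term n)) (τ : Term n) : ℕ :=
  sInf {k | τ ∈ borderClosure O k}

/-- Degree-`d` part of a set of terms. -/
def Od (O : Set (Term n)) (d : ℕ) : Set (Term n) := {τ | τ ∈ O ∧ tdeg τ = d}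

variable {K : Type*} [Field K]

/-- The index of a nonzero polynomial: the maximal index of a term of its support. -/
noncomputable def indP (O : Set (Term n)) (f : MvPolynomial (Fin (n + 1)) K) : ℕ :=
  f.support.sup (ind O)

/-- A homogeneous `∂𝒪`-prebasis: a family `g σ = σ - Σ_{τ ∈ 𝒪_{deg σ}} c_{στ} τ`. -/
def IsPrebasis (O : Set (Term n)) (g : Term n → MvPolynomial (Fin (n + 1)) K) : Prop :=
  ∀ σ ∈ border O, ∀ τ ∈ (monomial σ (1 : K) - g σ).support, τ ∈ O ∧ tdeg τ = tdeg σ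

/-- The set of border reductors `𝒯G = {η·g_σ : σ ∈ ∂𝒪, η ∈ 𝒯_σ}`. -/
def reductors (O : Set (Term n)) (lab : Term n → ℕ)
    (g : Term n → MvPolynomial (Fin (n + 1)) K) : Set (MvPolynomial (Fin (n + 1)) K) :=
  {p | ∃ σ ∈ border O, ∃ η ∈ mulSet O lab σ, p = monomial η (1 : K) * g σ}

/-- The degree-`d` border reductors `𝒯G_d = 𝒯G ∩ P_d`. -/
def reductorsDeg (O : Set (Term n)) (lab : Term n → ℕ)
    (g : Term n → MvPolynomial (Fin (n + 1)) K) (d : ℕ) :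
    Set (MvPolynomial (Fin (n + 1)) K) :=
  reductors O lab g ∩ {p | p.IsHomogeneous d}

/-- One step of the border reduction relation `→_G`. -/
def Step (O : Set (Term n)) (lab : Term n → ℕ)
    (g : Term n → MvPolynomial (Fin (n + 1)) K)
    (f h : MvPolynomial (Fin (n + 1)) K) : Prop :=
  ∃ σ ∈ border O, ∃ η ∈ mulSet O lab σ, η + σ ∈ f.support ∧
    h = f - f.coeff (η + σ) • (monomial η (1 : K) * g σ)

/-- The border reduction relation `→⁺_G` (finitely many, possibly zero, steps). -/
def Reduces (O : Set (Term n)) (lab : Term n → ℕ)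
    (g : Term n → MvPolynomial (Fin (n + 1)) K) :
    MvPolynomial (Fin (n + 1)) K → MvPolynomial (Fin (n + 1)) K → Prop :=
  Relation.ReflTransGen (Step O lab g)

/-- The `K`-vector space spanned by a set of terms. -/
noncomputable def spanTerms (K : Type*) [Field K] (S : Set (Term n)) :
    Submodule K (MvPolynomial (Fin (n + 1)) K) :=
  Submodule.span K ((fun τ => monomial τ (1 : K)) '' S)

/-- The ideal `(G)` generated by a `∂𝒪`-prebasis. -/
noncomputable def idealG (O : Set (Term n)) (g : Term n → MvPolynomial (Fin (n + 1)) K) :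
    Ideal (MvPolynomial (Fin (n + 1)) K) :=
  Ideal.span (g '' border O)

/-- The degree-`d` part `I_d` of an ideal, as a `K`-vector subspace. -/
noncomputable def degPart (I : Ideal (MvPolynomial (Fin (n + 1)) K)) (d : ℕ) :
    Submodule K (MvPolynomial (Fin (n + 1)) K) :=
  Submodule.restrictScalars K I ⊓ homogeneousSubmodule (Fin (n + 1)) K d

/-- Homogeneous ideal. -/
def IsHomogeneousIdeal (I : Ideal (MvPolynomial (Fin (n + 1)) K)) : Prop :=
  ∀ f ∈ I, ∀ d : ℕ, homogeneousComponent d f ∈ I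

/-- `G` is a homogeneous `∂𝒪`-basis of `J`: it is a prebasis contained in `J` and for every
`d` one has `P_d = J_d ⊕ ⟨𝒪_d⟩`, i.e. the residue classes of `𝒪_d` are a basis of `P_d/J_d`. -/
def IsBorderBasisOf (O : Set (Term n)) (g : Term n → MvPolynomial (Fin (n + 1)) K)
    (J : Ideal (MvPolynomial (Fin (n + 1)) K)) : Prop :=
  IsPrebasis O g ∧ (∀ σ ∈ border O, g σ ∈ J) ∧
    ∀ d : ℕ, degPart J d ⊔ spanTerms K (Od O d) = homogeneousSubmodule (Fin (n + 1)) K d ∧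
      Disjoint (degPart J d) (spanTerms K (Od O d))

/-- An `m`-lower representation of `f` by `𝒯G`: `f = Σ c_j • η_j·g_{σ_j}` with distinct
pairs `(η_j, σ_j)`, `η_j ∈ 𝒯_{σ_j}` and `ind(η_j σ_j) ≤ m`. -/
def HasLRep (O : Set (Term n)) (lab : Term n → ℕ)
    (g : Term n → MvPolynomial (Fin (n + 1)) K)
    (f : MvPolynomial (Fin (n + 1)) K) (m : ℕ) : Prop :=
  ∃ (s : Finset (Term n × Term n)) (c : Term n × Term n → K),
    (∀ p ∈ s, p.2 ∈ border O ∧ p.1 ∈ mulSet O lab p.2 ∧ ind O (p.1 + p.2) ≤ m) ∧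
    f = ∑ p ∈ s, c p • (monomial p.1 (1 : K) * g p.2)

/-- An `m`-lower representation of `f` by `𝒯G_d`. -/
def HasLRepDeg (O : Set (Term n)) (lab : Term n → ℕ)
    (g : Term n → MvPolynomial (Fin (n + 1)) K)
    (f : MvPolynomial (Fin (n + 1)) K) (m d : ℕ) : Prop :=
  ∃ (s : Finset (Term n × Term n)) (c : Term n × Term n → K),
    (∀ p ∈ s, p.2 ∈ border O ∧ p.1 ∈ mulSet O lab p.2 ∧ ind O (p.1 + p.2) ≤ m ∧
      (monomial p.1 (1 : K) * g p.2).IsHomogeneous d) ∧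
    f = ∑ p ∈ s, c p • (monomial p.1 (1 : K) * g p.2)

/-- The subtype of terms of `𝒪` of degree `d`. -/
abbrev OdSub (O : Set (Term n)) (d : ℕ) : Type _ := {τ : Term n // τ ∈ Od O d}

lemma tdeg_component_lt {d : ℕ} (m : Term n) (h : tdeg m = d) (i : Fin (n + 1)) :
    m i < d + 1 := by
  have : m i ≤ tdeg m :=
    Finset.single_le_sum (f := fun j => m j) (fun j _ => Nat.zero_le _) (Finset.mem_univ i)
  omega

instance (O : Set (Term n)) (d : ℕ) : Finite (OdSub O d) := by
  have hinj : Function.Injective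
      (fun τ : OdSub O d => fun i : Fin (n + 1) =>
        (⟨τ.1 i, tdeg_component_lt τ.1 τ.2.2 i⟩ : Fin (d + 1))) := by
    intro a b hab
    apply Subtype.ext
    apply Finsupp.ext
    intro i
    simpa using congrArg Fin.val (congrFun hab i)
  exact Finite.of_injective _ hinj

noncomputable instance (O : Set (Term n)) (d : ℕ) : Fintype (OdSub O d) :=
  Fintype.ofFinite _

open scoped Classical in
/-- The `r`-th `d`-graded formal multiplication matrix of a prebasis `G`,
with rows indexed by `𝒪_{d+1}` and columns by `𝒪_d`. -/
noncomputable def multMatrix (O : Set (Term n))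
    (g : Term n → MvPolynomial (Fin (n + 1)) K) (r : Fin (n + 1)) (d : ℕ) :
    Matrix (OdSub O (d + 1)) (OdSub O d) K :=
  Matrix.of fun τ' τ =>
    if τ.1 + Finsupp.single r 1 ∈ O then
      (if τ.1 + Finsupp.single r 1 = τ'.1 then 1 else 0)
    else (monomial (τ.1 + Finsupp.single r 1) (1 : K)
            - g (τ.1 + Finsupp.single r 1)).coeff τ'.1

/-- The minimum degree of a border term. -/
noncomputable def minDegBorder (O : Set (Term n)) : ℕ := sInf (tdeg '' border O)

/-- The `d`-th Macaulay transformation `a^{⟨d⟩}`, computed greedily. -/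
noncomputable def macaulay : ℕ → ℕ → ℕ
  | 0, _ => 0
  | d + 1, a =>
    if a = 0 then 0
    else
      Nat.choose (sSup {k | Nat.choose k (d + 1) ≤ a} + 1) (d + 2) +
        macaulay d (a - Nat.choose (sSup {k | Nat.choose k (d + 1) ≤ a}) (d + 1))

/-- An ideal is generated in degrees `≤ m` if it is generated by its homogeneous
elements of degree `≤ m`. -/
def GeneratedInDegLE (I : Ideal (MvPolynomial (Fin (n + 1)) K)) (m : ℕ) : Prop :=
  I = Ideal.span {f | f ∈ I ∧ ∃ d ≤ m, f.IsHomogeneous d}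

/-!
Attach to every term its index `ind`, the least `k` with the term in the `k`-th border closure
of `𝒪`. A reduction step at `η·σ` deletes `η·σ` and creates only terms `η·τ` with `τ ∈ 𝒪`,
whose index is at most `deg η`. The index of `η·σ` itself exceeds `deg η`: otherwise some
`τ ∈ 𝒪` of degree `≥ deg σ` divides `η·σ`, hence so does a border term of degree `> deg σ`,
which carries a larger label than `σ` and so is excluded by `η ∈ 𝒯_σ`. Thus each step
decreases the multiset of indices of the support in the Dershowitz–Manna order, which is
well-founded.
-/

theorem _root_.Finsupp.degree_lt_degree {σ : Type*} {a b : σ →₀ ℕ} (h : a < b) :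
    a.degree < b.degree := by
  obtain ⟨c, rfl⟩ := le_iff_exists_add.mp h.le
  have hc : c.degree ≠ 0 := by
    rw [Ne, Finsupp.degree_eq_zero_iff]
    rintro rfl
    simp at h
  rw [map_add]
  omega

theorem _root_.Finsupp.exists_add_single_le_of_lt {σ : Type*} {a b : σ →₀ ℕ} (h : a < b) :
    ∃ r, a + Finsupp.single r 1 ≤ b := by
  obtain ⟨c, rfl⟩ := le_iff_exists_add.mp h.le
  obtain ⟨r, hr⟩ : c.support.Nonempty := by
    rw [Finsupp.support_nonempty_iff]
    rintro rfl
    simp at h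
  refine ⟨r, add_le_add_right (Finsupp.single_le_iff.mpr ?_) a⟩
  rw [Finsupp.mem_support_iff] at hr
  omega

theorem _root_.Finset.isDershowitzMannaLT_map_val {α β : Type*} [DecidableEq α] [Preorder β]
    (φ : α → β) {S S' T : Finset α} {b : α} (hb : b ∈ S) (hS' : S' ⊆ S.erase b ∪ T)
    (hT : ∀ t ∈ T, φ t < φ b) : (S'.val.map φ).IsDershowitzMannaLT (S.val.map φ) := by
  have hbS' : b ∉ S' := fun h => by
    rcases Finset.mem_union.mp (hS' h) with h | h
    · simp at h
    · exact lt_irrefl _ (hT b h)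
  have hcommon : S'.filter (· ∈ S) = S.filter (· ∈ S') := by
    ext; simp only [Finset.mem_filter]; tauto
  refine ⟨(S.filter (· ∈ S')).val.map φ, (S'.filter (· ∉ S)).val.map φ,
    (S.filter (· ∉ S')).val.map φ, ?_, ?_, ?_, ?_⟩
  · rw [Ne, Multiset.empty_eq_zero, Multiset.map_eq_zero, Finset.val_eq_zero,
      Finset.filter_eq_empty_iff]
    exact fun h => h hb hbS'
  · rw [← Multiset.map_add, ← hcommon, Finset.filter_val, Finset.filter_val,
      Multiset.filter_add_not]
  · rw [← Multiset.map_add, Finset.filter_val, Finset.filter_val, Multiset.filter_add_not]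
  · simp only [Multiset.mem_map, Finset.mem_val, Finset.mem_filter]
    rintro _ ⟨a, ⟨haS', haS⟩, rfl⟩
    have haT : a ∈ T := by
      simpa [haS] using hS' haS'
    exact ⟨φ b, ⟨b, ⟨hb, hbS'⟩, rfl⟩, hT a haT⟩

theorem _root_.MvPolynomial.support_sub_monomial_coeff {σ R : Type*} [CommRing R]
    [DecidableEq σ] (p : MvPolynomial σ R) (β : σ →₀ ℕ) :
    (p - monomial β (p.coeff β)).support = p.support.erase β := by
  ext γ
  rw [MvPolynomial.mem_support_iff, Finset.mem_erase, MvPolynomial.mem_support_iff,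
    MvPolynomial.coeff_sub, MvPolynomial.coeff_monomial]
  by_cases hγ : β = γ
  · subst hγ; simp
  · simp [hγ, Ne.symm hγ]

theorem _root_.MvPolynomial.support_monomial_mul_subset {σ R : Type*} [CommSemiring R]
    [DecidableEq σ] (η : σ →₀ ℕ) (r : R) (t : MvPolynomial σ R) :
    (monomial η r * t).support ⊆ t.support.image (η + ·) := by
  intro γ hγ
  obtain ⟨x, hx, y, hy, rfl⟩ := Finset.mem_add.mp (MvPolynomial.support_mul _ _ hγ)
  rw [Finset.mem_singleton.mp (MvPolynomial.support_monomial_subset hx)]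
  exact Finset.mem_image_of_mem _ hy

lemma tdeg_eq_degree (m : Term n) : tdeg m = m.degree := (Finsupp.degree_eq_sum m).symm

section OrderIdeal

variable {O : Set (Term n)}

lemma borderClosure_mono (O : Set (Term n)) : Monotone (borderClosure O) :=
  monotone_nat_of_le_succ fun _ => Set.subset_union_left

lemma single_add_mem_borderClosure_succ {k : ℕ} {ρ : Term n} (r : Fin (n + 1))
    (h : ρ ∈ borderClosure O k) : Finsupp.single r 1 + ρ ∈ borderClosure O (k + 1) := by
  by_cases h' : Finsupp.single r 1 + ρ ∈ borderClosure O k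
  · exact borderClosure_mono O k.le_succ h'
  · exact Or.inr ⟨h', r, ρ, h, add_comm _ _⟩

lemma add_mem_borderClosure (c : Term n) {k : ℕ} {ρ : Term n} (h : ρ ∈ borderClosure O k) :
    c + ρ ∈ borderClosure O (c.degree + k) := by
  induction c using Finsupp.induction_linear generalizing k ρ with
  | zero => simpa using h
  | add c₁ c₂ h₁ h₂ =>
    rw [map_add, add_assoc, add_assoc]
    exact h₁ (h₂ h)
  | single r b =>
    induction b generalizing k ρ with
    | zero => simpa using h
    | succ b ih =>
      rw [Finsupp.single_add, map_add, Finsupp.degree_single, Finsupp.degree_single,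
        add_comm (Finsupp.single r b), add_assoc (Finsupp.single r 1), add_right_comm b 1 k]
      exact single_add_mem_borderClosure_succ r (by simpa using ih h)

lemma exists_le_of_mem_borderClosure {k : ℕ} {m : Term n} (h : m ∈ borderClosure O k) :
    ∃ τ ∈ O, τ ≤ m ∧ m.degree ≤ τ.degree + k := by
  induction k generalizing m with
  | zero => exact ⟨m, h, le_rfl, le_rfl⟩
  | succ k ih =>
    rcases h with h | ⟨-, r, ρ, hρ, rfl⟩
    · obtain ⟨τ, hτ, hle, hdeg⟩ := ih h
      exact ⟨τ, hτ, hle, by omega⟩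
    · obtain ⟨τ, hτ, hle, hdeg⟩ := ih hρ
      refine ⟨τ, hτ, hle.trans le_self_add, ?_⟩
      rw [map_add, Finsupp.degree_single]
      omega

lemma ind_add_le {τ : Term n} (hτ : τ ∈ O) (η : Term n) : ind O (η + τ) ≤ η.degree :=
  Nat.sInf_le (add_mem_borderClosure η (k := 0) hτ)

lemma exists_mem_border_between {τ m : Term n} (hτ : τ ∈ O) (hle : τ ≤ m)
    (hm : m ∉ O) : ∃ σ ∈ border O, τ < σ ∧ σ ≤ m := by
  obtain ⟨ρ, hτρ, hρ⟩ := (Set.finite_Iic m).subset (fun _ h => h.2 : {ρ | ρ ∈ O ∧ ρ ≤ m} ⊆ _)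
    |>.exists_le_maximal ⟨hτ, hle⟩
  have hρm : ρ < m := hρ.prop.2.lt_of_ne (by rintro rfl; exact hm hρ.prop.1)
  obtain ⟨r, hr⟩ := Finsupp.exists_add_single_le_of_lt hρm
  have hlt : ρ < ρ + Finsupp.single r 1 :=
    lt_add_of_pos_right ρ (pos_iff_ne_zero.mpr (Finsupp.single_ne_zero.mpr one_ne_zero))
  refine ⟨ρ + Finsupp.single r 1, ⟨fun hO => ?_, r, ρ, hρ.prop.1, rfl⟩,
    hτρ.trans_lt hlt, hr⟩
  exact hlt.not_ge (hρ.2 ⟨hO, hr⟩ hlt.le)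

lemma DegOrderedLabeling.lt_of_tdeg_lt {lab : Term n → ℕ}
    (hlab : DegOrderedLabeling O lab) {σ σ' : Term n} (hσ : σ ∈ border O)
    (hσ' : σ' ∈ border O) (h : tdeg σ < tdeg σ') : lab σ < lab σ' := by
  rcases lt_trichotomy (lab σ) (lab σ') with hl | hl | hl
  · exact hl
  · exact absurd (hlab.1 hσ hσ' hl ▸ h) (lt_irrefl _)
  · exact absurd (hlab.2 σ' hσ' σ hσ hl) h.not_ge

lemma degree_lt_ind (hO : IsOrderIdeal O) {lab : Term n → ℕ}
    (hlab : DegOrderedLabeling O lab) {σ η : Term n} (hσ : σ ∈ border O)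
    (hη : η ∈ mulSet O lab σ) : η.degree < ind O (η + σ) := by
  have hmem : η + σ ∈ borderClosure O (ind O (η + σ)) := by
    obtain ⟨-, r, τ, hτ, hστ⟩ := hσ
    refine Nat.sInf_mem (s := {k | η + σ ∈ borderClosure O k})
      ⟨(η + Finsupp.single r 1).degree, ?_⟩
    rw [hστ, add_comm τ, ← add_assoc]
    exact add_mem_borderClosure _ (k := 0) hτ
  by_contra! hind
  obtain ⟨τ, hτ, hτle, hdeg⟩ := exists_le_of_mem_borderClosure hmem
  have hnotO : η + σ ∉ O := fun h => hσ.1 (hO.2 _ h σ le_add_self)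
  obtain ⟨σ', hσ', hτσ', hσ'le⟩ := exists_mem_border_between hτ hτle hnotO
  have hdeg' : tdeg σ < tdeg σ' := by
    rw [tdeg_eq_degree, tdeg_eq_degree]
    rw [map_add] at hdeg
    have := Finsupp.degree_lt_degree hτσ'
    omega
  exact hη σ' hσ' (hlab.lt_of_tdeg_lt hσ hσ' hdeg') hσ'le

lemma support_step_subset (g : Term n → MvPolynomial (Fin (n + 1)) K)
    (f : MvPolynomial (Fin (n + 1)) K) (σ η : Term n) :
    (f - f.coeff (η + σ) • (monomial η (1 : K) * g σ)).support ⊆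
      f.support.erase (η + σ) ∪ (monomial σ (1 : K) - g σ).support.image (η + ·) := by
  have hsplit : f - f.coeff (η + σ) • (monomial η (1 : K) * g σ) =
      (f - monomial (η + σ) (f.coeff (η + σ))) +
        f.coeff (η + σ) • (monomial η (1 : K) * (monomial σ 1 - g σ)) := by
    rw [mul_sub, MvPolynomial.monomial_mul, one_mul, smul_sub, MvPolynomial.smul_monomial,
      smul_eq_mul, mul_one]
    ring
  rw [hsplit, ← MvPolynomial.support_sub_monomial_coeff]
  exact MvPolynomial.support_add.trans (Finset.union_subset_union subset_rfl
    (MvPolynomial.support_smul.trans (MvPolynomial.support_monomial_mul_subset _ _ _)))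

lemma Step.isDershowitzMannaLT (hO : IsOrderIdeal O) {lab : Term n → ℕ}
    (hlab : DegOrderedLabeling O lab) {g : Term n → MvPolynomial (Fin (n + 1)) K}
    (hg : IsPrebasis O g) {f h : MvPolynomial (Fin (n + 1)) K} (hstep : Step O lab g f h) :
    (h.support.val.map (ind O)).IsDershowitzMannaLT (f.support.val.map (ind O)) := by
  obtain ⟨σ, hσ, η, hη, hβ, rfl⟩ := hstep
  refine Finset.isDershowitzMannaLT_map_val (ind O) hβ (support_step_subset g f σ η) ?_
  simp only [Finset.mem_image]
  rintro _ ⟨δ, hδ, rfl⟩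
  exact (ind_add_le (hg σ hσ δ hδ).1 η).trans_lt (degree_lt_ind hO hlab hσ hη)

end OrderIdeal

/-- **Noetherianity.** For a degree-ordered labeling, the border reduction relation
`→_G` admits no infinite reduction chain. -/
theorem reduction_noetherian (O : Set (Term n)) (hO : IsOrderIdeal O)
    (lab : Term n → ℕ) (hlab : DegOrderedLabeling O lab)
    (g : Term n → MvPolynomial (Fin (n + 1)) K) (hg : IsPrebasis O g) :
    ∀ f : ℕ → MvPolynomial (Fin (n + 1)) K, ¬ (∀ i : ℕ, Step O lab g (f i) (f (i + 1))) := by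
  intro f hstep
  exact (wellFounded_iff_isEmpty_descending_chain.1 Multiset.wellFounded_isDershowitzMannaLT).elim
    ⟨fun i => (f i).support.val.map (ind O), fun i => (hstep i).isDershowitzMannaLT hO hlab hg⟩

end Border
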